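/- arXiv:2209.01399 — 10 statements merged into one kernel-verified Lean document; each statement's English description precedes it below -/
import Mathlib

section
/- Let M be a module over a ring R with only finitely many small submodules. Then Rad(M) is a small submodule of M; in particular Rad(M) ≠ M (provided M ≠ 0). -/
/-- A submodule `N` of `M` is small (superfluous): `N + A = M` implies `A = M`. -/
def IsSmallSubmodule {R M : Type*} [Ring R] [AddCommGroup M] [Module R M]
    (N : Submodule R M) : Prop :=
  ∀ A : Submodule R M, N ⊔ A = ⊤ → A = ⊤

/-- `M` is an fs-module: it has only finitely many small submodules. -/
def IsFsModule (R M : Type*) [Ring R] [AddCommGroup M] [Module R M] : Prop :=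
  {N : Submodule R M | IsSmallSubmodule N}.Finite

/-- The radical of `M`, as the sum of all small submodules of `M`. -/
def modRad (R M : Type*) [Ring R] [AddCommGroup M] [Module R M] : Submodule R M :=
  sSup {N : Submodule R M | IsSmallSubmodule N}

/-- The radical of `M`, as the intersection of all maximal submodules of `M`. -/
def modRad' (R M : Type*) [Ring R] [AddCommGroup M] [Module R M] : Submodule R M :=
  sInf {N : Submodule R M | IsCoatom N}

/-- The socle of `M`: the sum of all minimal (simple) submodules of `M`. -/
def modSoc (R M : Type*) [Ring R] [AddCommGroup M] [Module R M] : Submodule R M :=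
  sSup {N : Submodule R M | IsAtom N}

/-- `M` has finite hollow dimension: for every descending chain `N₁ ⊇ N₂ ⊇ ⋯`
there is `n` such that `Nₙ / N_k` is small in `M / N_k` for all `k ≥ n`. -/
def HasFiniteHollowDim (R M : Type*) [Ring R] [AddCommGroup M] [Module R M] : Prop :=
  ∀ N : ℕ → Submodule R M, (∀ i j, i ≤ j → N j ≤ N i) →
    ∃ n, ∀ k, n ≤ k → IsSmallSubmodule (Submodule.map (N k).mkQ (N n))

/-- `M` has finite Goldie dimension: it contains no infinite direct sum of
nonzero submodules. -/
def HasFiniteGoldieDim (R M : Type*) [Ring R] [AddCommGroup M] [Module R M] : Prop :=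
  ¬ ∃ f : ℕ → Submodule R M, (∀ i, f i ≠ ⊥) ∧ iSupIndep f

/-! Small submodules are closed under finite sums and contain `⊥`, so when there are only
finitely many of them their sum, the radical, is itself one of them. -/

section SmallSubmodule

variable {R M : Type*} [Ring R] [AddCommGroup M] [Module R M]

theorem isSmallSubmodule_bot : IsSmallSubmodule (⊥ : Submodule R M) := fun A h => by
  rwa [bot_sup_eq] at h

theorem IsSmallSubmodule.sup {N N' : Submodule R M} (hN : IsSmallSubmodule N)
    (hN' : IsSmallSubmodule N') : IsSmallSubmodule (N ⊔ N') := fun A h =>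
  hN' A (hN _ (by rwa [sup_assoc] at h))

theorem supClosed_isSmallSubmodule : SupClosed {N : Submodule R M | IsSmallSubmodule N} :=
  fun _ hN _ hN' => hN.sup hN'

theorem IsSmallSubmodule.ne_top [Nontrivial M] {N : Submodule R M} (hN : IsSmallSubmodule N) :
    N ≠ ⊤ := fun hN_top =>
  bot_ne_top (hN ⊥ (by rw [hN_top, top_sup_eq]))

theorem isSmallSubmodule_sSup_of_finite {s : Set (Submodule R M)} (hs : s.Finite)
    (h_small : ∀ N ∈ s, IsSmallSubmodule N) : IsSmallSubmodule (sSup s) :=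
  supClosed_isSmallSubmodule.sSup_mem hs isSmallSubmodule_bot h_small

end SmallSubmodule

theorem rad_small_of_fs (R M : Type*) [Ring R] [AddCommGroup M] [Module R M]
    (hfs : IsFsModule R M) :
    IsSmallSubmodule (modRad R M) ∧ (Nontrivial M → modRad R M ≠ ⊤) := by
  have hsmall : IsSmallSubmodule (modRad R M) :=
    isSmallSubmodule_sSup_of_finite hfs fun _ hN => hN
  exact ⟨hsmall, fun _ => hsmall.ne_top⟩
end

section
/- An R-module M has only finitely many small submodules if and only if Rad(M) has only finitely many submodules. -/
namespace IsSmallSubmodule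

variable {R M : Type*} [Ring R] [AddCommGroup M] [Module R M]

theorem mono {N N' : Submodule R M} (h : N ≤ N') (hN' : IsSmallSubmodule N') :
    IsSmallSubmodule N :=
  fun A hA => hN' A (top_le_iff.mp (hA ▸ sup_le_sup_right h A))

theorem bot : IsSmallSubmodule (⊥ : Submodule R M) :=
  fun A hA => by rwa [bot_sup_eq] at hA

theorem sup_s2 {N N' : Submodule R M} (hN : IsSmallSubmodule N) (hN' : IsSmallSubmodule N') :
    IsSmallSubmodule (N ⊔ N') :=
  fun A hA => hN' A (hN (N' ⊔ A) (by rwa [← sup_assoc]))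

theorem sSup_of_finite {S : Set (Submodule R M)} (hS : S.Finite)
    (h : ∀ N ∈ S, IsSmallSubmodule N) : IsSmallSubmodule (sSup S) := by
  rw [← hS.coe_toFinset, ← Finset.sup_id_eq_sSup]
  exact Finset.sup_induction bot (fun _ h₁ _ h₂ => h₁.sup_s2 h₂)
    fun N hN => h N (hS.mem_toFinset.mp hN)

theorem le_modRad {N : Submodule R M} (hN : IsSmallSubmodule N) : N ≤ modRad R M :=
  le_sSup hN

end IsSmallSubmodule

theorem IsFsModule.isSmallSubmodule_modRad {R M : Type*} [Ring R] [AddCommGroup M]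
    [Module R M] (hfs : IsFsModule R M) : IsSmallSubmodule (modRad R M) :=
  IsSmallSubmodule.sSup_of_finite hfs fun _ hN => hN

theorem fs_iff_rad_finitely_many_submodules (R M : Type*) [Ring R] [AddCommGroup M]
    [Module R M] :
    IsFsModule R M ↔ {N : Submodule R M | N ≤ modRad R M}.Finite :=
  ⟨fun hfs => hfs.subset fun _ hN => hfs.isSmallSubmodule_modRad.mono hN,
    fun hfin => hfin.subset fun _ hN => IsSmallSubmodule.le_modRad hN⟩
end

section
/- Every local fs-module is both Noetherian and Artinian. -/
theorem local_fs_noetherian_artinian (R M : Type*) [Ring R] [AddCommGroup M] [Module R M]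
    (hloc : ∃ K : Submodule R M, IsCoatom K ∧ ∀ N : Submodule R M, N ≠ ⊤ → N ≤ K)
    (hfs : IsFsModule R M) :
    IsNoetherian R M ∧ IsArtinian R M := by
  obtain ⟨K, hK, hKle⟩ := hloc
  have hsmall : ∀ N : Submodule R M, N ≠ ⊤ → IsSmallSubmodule N := by
    intro N hN A hA
    by_contra hA'
    have h1 : N ⊔ A ≤ K := sup_le (hKle N hN) (hKle A hA')
    rw [hA] at h1
    exact hK.1 (top_le_iff.mp h1)
  have hfin : (Set.univ : Set (Submodule R M)).Finite := by
    apply Set.Finite.subset (hfs.insert ⊤)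
    intro N _
    by_cases h : N = ⊤
    · exact Or.inl h
    · exact Or.inr (hsmall N h)
  have : Finite (Submodule R M) := Set.finite_univ_iff.mp hfin
  exact ⟨isNoetherian_mk inferInstance, inferInstance⟩
end

section
/- Every submodule of an fs-module is an fs-module; conversely, if every submodule of M is an fs-module then M is an fs-module. -/
/-- A small submodule of a submodule is small in the ambient module. -/
lemma isSmall_map_of_isSmall {R M : Type*} [Ring R] [AddCommGroup M] [Module R M]
    (N : Submodule R M) (S : Submodule R N) (hS : IsSmallSubmodule S) :
    IsSmallSubmodule (S.map N.subtype) := by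
  intro A hA
  have hmapinj := Submodule.map_injective_of_injective (f := N.subtype) N.injective_subtype
  have hle : S.map N.subtype ≤ N := by
    intro x hx
    rcases hx with ⟨y, _, rfl⟩
    exact y.2
  -- modular law: (S ⊔ A) ⊓ N = S ⊔ (A ⊓ N)
  have hmod : S.map N.subtype ⊔ (N ⊓ A) = N := by
    rw [inf_comm, ← sup_inf_assoc_of_le _ hle, hA, top_inf_eq]
  have hmap : (S ⊔ A.comap N.subtype).map N.subtype = (⊤ : Submodule R N).map N.subtype := by
    rw [Submodule.map_sup, Submodule.map_comap_subtype, Submodule.map_top,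
      Submodule.range_subtype, hmod]
  have htop : S ⊔ A.comap N.subtype = ⊤ := hmapinj hmap
  have hN : A.comap N.subtype = ⊤ := hS _ htop
  have hNA : N ≤ A := by
    intro x hx
    have : (⟨x, hx⟩ : N) ∈ A.comap N.subtype := hN ▸ Submodule.mem_top
    exact this
  have : (⊤ : Submodule R M) ≤ A := by
    rw [← hA]
    exact sup_le (hle.trans hNA) le_rfl
  exact top_le_iff.mp this

theorem fs_iff_all_submodules_fs (R M : Type*) [Ring R] [AddCommGroup M] [Module R M] :
    IsFsModule R M ↔ ∀ N : Submodule R M, IsFsModule R N := by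
  constructor
  · intro hM N
    have hinj : Function.Injective (Submodule.map N.subtype) :=
      Submodule.map_injective_of_injective N.injective_subtype
    have hsub : {S : Submodule R N | IsSmallSubmodule S} ⊆
        (Submodule.map N.subtype) ⁻¹' {T : Submodule R M | IsSmallSubmodule T} := by
      intro S hS
      exact isSmall_map_of_isSmall N S hS
    exact (hM.preimage hinj.injOn).subset hsub
  · intro h
    have hT := h ⊤
    let e : Submodule R (⊤ : Submodule R M) ≃o Submodule R M :=
      Submodule.orderIsoMapComap (Submodule.topEquiv)
    have hsmall : ∀ S : Submodule R (⊤ : Submodule R M),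
        IsSmallSubmodule S → IsSmallSubmodule (e S) := by
      intro S hS A hA
      have : S ⊔ e.symm A = ⊤ := by
        apply e.injective
        rw [e.map_sup, e.apply_symm_apply, e.map_top, hA]
      have := hS _ this
      have : A = e ⊤ := by rw [← this, e.apply_symm_apply]
      rw [this, e.map_top]
    have himg : {T : Submodule R M | IsSmallSubmodule T} ⊆
        e '' {S : Submodule R (⊤ : Submodule R M) | IsSmallSubmodule S} := by
      intro T hT'
      refine ⟨e.symm T, ?_, e.apply_symm_apply T⟩
      intro A hA
      have : T ⊔ e A = ⊤ := by
        apply e.symm.injective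
        rw [e.symm.map_sup, e.symm_apply_apply, e.symm.map_top, hA]
      have := hT' _ this
      have : e A = e ⊤ := by rw [this, e.map_top]
      exact e.injective this
    exact (hT.image e).subset himg
end

section
/- Let M be a nonzero R-module with only finitely many small submodules and Rad(M) ≠ 0. Then M has a submodule that is simultaneously a minimal (simple) submodule and a small submodule of M; in particular Soc(Rad(M)) ≠ 0. -/
theorem IsAtom.of_minimal_ne_bot {α : Type*} [PartialOrder α] [OrderBot α] {P : α → Prop}
    (hP : ∀ ⦃a b⦄, P a → b ≤ a → P b) {a : α} (ha : Minimal (fun x => P x ∧ x ≠ ⊥) a) :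
    IsAtom a :=
  isAtom_iff_le_of_ge.mpr ⟨ha.1.2, fun _ hb hba => ha.2 ⟨hP ha.1.1 hba, hb⟩ hba⟩

section

variable {R M : Type*} [Ring R] [AddCommGroup M] [Module R M]

theorem IsSmallSubmodule.mono_s8 {N B : Submodule R M} (hN : IsSmallSubmodule N) (hB : B ≤ N) :
    IsSmallSubmodule B :=
  fun A hA => hN A (top_le_iff.mp (hA ▸ sup_le_sup_right hB A))

theorem exists_isSmallSubmodule_ne_bot (hrad : modRad R M ≠ ⊥) :
    ∃ N : Submodule R M, IsSmallSubmodule N ∧ N ≠ ⊥ := by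
  by_contra! h
  exact hrad (sSup_eq_bot.mpr h)

end

theorem exists_minimal_small_of_fs_general (R M : Type*) [Ring R] [AddCommGroup M] [Module R M]
    (hfs : IsFsModule R M) (hrad : modRad R M ≠ ⊥) :
    ∃ S : Submodule R M, IsAtom S ∧ IsSmallSubmodule S ∧ S ≤ modRad R M := by
  have hfin : {N : Submodule R M | IsSmallSubmodule N ∧ N ≠ ⊥}.Finite :=
    hfs.subset fun _ hN => hN.1
  obtain ⟨S, hS⟩ := hfin.exists_minimal (exists_isSmallSubmodule_ne_bot hrad)
  exact ⟨S, IsAtom.of_minimal_ne_bot (fun _ _ hN hB => hN.mono_s8 hB) hS, hS.1.1, le_sSup hS.1.1⟩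

theorem exists_minimal_small_of_fs (R M : Type*) [Ring R] [AddCommGroup M] [Module R M]
    [Nontrivial M] (hfs : IsFsModule R M) (hrad : modRad R M ≠ ⊥) :
    ∃ S : Submodule R M, IsAtom S ∧ IsSmallSubmodule S ∧ S ≤ modRad R M :=
  exists_minimal_small_of_fs_general R M hfs hrad
end

section
/- A semisimple submodule S of an R-module M is small in M if and only if S ⊆ Rad(M). -/
/-!
A small submodule lies in every maximal submodule `m`, since otherwise `N ⊔ m = ⊤` with `m ≠ ⊤`.
Conversely, if `S ⊔ A = ⊤` with `A ≠ ⊤`, then `M ⧸ A` is a nonzero image of the semisimple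
module `S`, hence semisimple and so has a maximal submodule; its preimage is a maximal submodule
of `M` containing `A`, and also `S` because `S ≤ Rad M`, contradicting `S ⊔ A = ⊤`.
-/

section

variable {R M : Type*} [Ring R] [AddCommGroup M] [Module R M]

theorem IsSmallSubmodule.le_modRad' {N : Submodule R M} (hN : IsSmallSubmodule N) :
    N ≤ modRad' R M :=
  le_sInf fun m hm => by_contra fun hNm => hm.1 (hN m (hm.2 _ (right_lt_sup.2 hNm)))

theorem Submodule.exists_isCoatom_le_of_sup_eq_top {S A : Submodule R M} [IsSemisimpleModule R S]
    (hSA : S ⊔ A = ⊤) (hA : A ≠ ⊤) : ∃ m : Submodule R M, IsCoatom m ∧ A ≤ m := by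
  have hsurj : Function.Surjective (A.mkQ ∘ₗ S.subtype) := by
    rw [← LinearMap.range_eq_top, LinearMap.range_comp, Submodule.range_subtype,
      Submodule.map_mkQ_eq_top, sup_comm, hSA]
  have : IsSemisimpleModule R (M ⧸ A) := .of_surjective _ hsurj
  have : Nontrivial (M ⧸ A) := Submodule.Quotient.nontrivial_iff.2 hA
  obtain ⟨c, hc, -⟩ :=
    (eq_top_or_exists_le_coatom (⊥ : Submodule R (M ⧸ A))).resolve_left bot_ne_top
  let m := A.comapMkQRelIso c
  exact ⟨m, ((OrderIso.isCoatom_iff _ c).2 hc).of_isCoatom_coe_Ici, m.2⟩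

end

theorem semisimple_submodule_small_iff_le_rad (R M : Type*) [Ring R] [AddCommGroup M]
    [Module R M] (S : Submodule R M) (hS : IsSemisimpleModule R S) :
    IsSmallSubmodule S ↔ S ≤ modRad' R M := by
  refine ⟨IsSmallSubmodule.le_modRad', fun hS_rad A hSA => by_contra fun hA => ?_⟩
  obtain ⟨m, hm, hAm⟩ := Submodule.exists_isCoatom_le_of_sup_eq_top hSA hA
  have hSm : S ≤ m := hS_rad.trans (sInf_le hm)
  exact hm.1 (top_le_iff.1 (hSA ▸ sup_le hSm hAm))
end

section
/- Let M be a nonzero R-module with Rad(M) = 0 and finite hollow dimension. Then M is a finitely generated semisimple module. -/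
/-!
Call `N'` a coatom cut of `N` if `N' = N ⊓ K` for a maximal submodule `K` not containing `N`.
Along a chain of coatom cuts each `Nₙ / Nₙ₊₁` is a nonzero direct summand of `M / Nₙ₊₁`
(its complement is `K / Nₙ₊₁`), so it is never small there; finite hollow dimension therefore
makes coatom cuts well-founded. A minimal finite intersection of maximal submodules admits no
further cut, which by `Rad M = 0` forces it to be `0`. Then `M` embeds into the finite product of
its simple quotients, which is semisimple and Noetherian.
-/

section

variable {R M : Type*} [Ring R] [AddCommGroup M] [Module R M]

theorem IsSmallSubmodule.eq_top_of_map_mkQ {N L K : Submodule R M}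
    (hL : IsSmallSubmodule (L.map N.mkQ)) (hNK : N ≤ K) (hLK : L ⊔ K = ⊤) : K = ⊤ := by
  have hmap : L.map N.mkQ ⊔ K.map N.mkQ = ⊤ := by
    rw [← Submodule.map_sup, hLK, Submodule.map_top, Submodule.range_mkQ]
  rw [← sup_eq_right.mpr hNK, ← Submodule.map_mkQ_eq_top]
  exact hL _ hmap

def IsCoatomCut (N' N : Submodule R M) : Prop :=
  ∃ K, IsCoatom K ∧ ¬ N ≤ K ∧ N' = N ⊓ K

theorem HasFiniteHollowDim.wellFounded_isCoatomCut (hh : HasFiniteHollowDim R M) :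
    WellFounded (IsCoatomCut (R := R) (M := M)) := by
  refine wellFounded_iff_isEmpty_descending_chain.mpr ⟨fun ⟨N, hN⟩ => ?_⟩
  choose K hK hNK hcut using hN
  have hanti : Antitone N := antitone_nat_of_succ_le fun n => (hcut n).symm ▸ inf_le_left
  obtain ⟨n, hn⟩ := hh N fun i j hij => hanti hij
  have hsup : N n ⊔ K n = ⊤ := ((hK n).not_le_iff_codisjoint.mp (hNK n)).symm.eq_top
  exact (hK n).1 <| (hn (n + 1) n.le_succ).eq_top_of_map_mkQ ((hcut n).symm ▸ inf_le_right) hsup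

theorem exists_isCoatom_not_le_of_modRad'_eq_bot (hrad : modRad' R M = ⊥)
    {N : Submodule R M} (hN : N ≠ ⊥) : ∃ K, IsCoatom K ∧ ¬ N ≤ K := by
  by_contra! h
  exact hN (eq_bot_iff.mpr (hrad ▸ le_sInf h))

theorem exists_finite_isCoatom_sInf_eq_bot (hrad : modRad' R M = ⊥)
    (hh : HasFiniteHollowDim R M) :
    ∃ s : Set (Submodule R M), s.Finite ∧ (∀ K ∈ s, IsCoatom K) ∧ sInf s = ⊥ := by
  let S := {N : Submodule R M |
    ∃ s : Set (Submodule R M), s.Finite ∧ (∀ K ∈ s, IsCoatom K) ∧ sInf s = N}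
  obtain ⟨_, ⟨s, hfin, hs, rfl⟩, hmin⟩ :=
    hh.wellFounded_isCoatomCut.has_min S ⟨⊤, ∅, Set.finite_empty, by simp, sInf_empty⟩
  refine ⟨s, hfin, hs, by_contra fun hne => ?_⟩
  obtain ⟨K, hK, hsK⟩ := exists_isCoatom_not_le_of_modRad'_eq_bot hrad hne
  refine hmin _ ⟨insert K s, hfin.insert K, ?_, sInf_insert.trans (inf_comm _ _)⟩
    ⟨K, hK, hsK, rfl⟩
  rintro L (rfl | hL)
  exacts [hK, hs L hL]

theorem injective_pi_mkQ_of_iInf_eq_bot {ι : Type*} {p : ι → Submodule R M}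
    (hp : ⨅ i, p i = ⊥) :
    Function.Injective (LinearMap.pi fun i => (p i).mkQ) := by
  rw [← LinearMap.ker_eq_bot, LinearMap.ker_pi]
  simpa only [Submodule.ker_mkQ] using hp

theorem isSemisimpleModule_and_finite_of_iInf_isCoatom_eq_bot {ι : Type*} [Finite ι]
    {p : ι → Submodule R M} (hp : ∀ i, IsCoatom (p i)) (hbot : ⨅ i, p i = ⊥) :
    IsSemisimpleModule R M ∧ Module.Finite R M := by
  have : ∀ i, IsSimpleModule R (M ⧸ p i) := fun i => isSimpleModule_iff_isCoatom.mpr (hp i)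
  have hinj := injective_pi_mkQ_of_iInf_eq_bot hbot
  have := isNoetherian_of_injective _ hinj
  exact ⟨.congr (LinearEquiv.ofInjective _ hinj), inferInstance⟩

end

theorem semisimple_of_rad_zero_finite_hollow_general (R M : Type*) [Ring R] [AddCommGroup M]
    [Module R M] (hrad : modRad' R M = ⊥)
    (hh : HasFiniteHollowDim R M) :
    IsSemisimpleModule R M ∧ Module.Finite R M := by
  obtain ⟨s, hfin, hs, hbot⟩ := exists_finite_isCoatom_sInf_eq_bot hrad hh
  have : Finite s := hfin
  exact isSemisimpleModule_and_finite_of_iInf_isCoatom_eq_bot (p := Subtype.val)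
    (fun K => hs K K.2) (sInf_eq_iInf' s ▸ hbot)

theorem semisimple_of_rad_zero_finite_hollow (R M : Type*) [Ring R] [AddCommGroup M]
    [Module R M] [Nontrivial M] (hrad : modRad' R M = ⊥)
    (hh : HasFiniteHollowDim R M) :
    IsSemisimpleModule R M ∧ Module.Finite R M :=
  semisimple_of_rad_zero_finite_hollow_general R M hrad hh
end

section
/- Let R be a ring. Then R is a right us-ring (i.e., R has a unique nonzero small right ideal) if and only if J(R) is a minimal right ideal of R and J(R)² = 0. -/
section Aux

open MulOpposite

variable {R : Type*} [Ring R]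

lemma usAux_top_fg : (⊤ : Submodule Rᵐᵒᵖ R).FG := by
  refine ⟨{1}, ?_⟩
  rw [eq_top_iff]
  intro r _
  have hr : r = op r • (1 : R) := by simp [op_smul_eq_mul]
  rw [hr]
  exact Submodule.smul_mem _ _ (Submodule.subset_span (by simp))

lemma usAux_coatomic : IsCoatomic (Submodule Rᵐᵒᵖ R) :=
  CompleteLattice.coatomic_of_top_compact ((Submodule.fg_iff_compact _).mp usAux_top_fg)

lemma usAux_small_le_rad {N : Submodule Rᵐᵒᵖ R} (h : IsSmallSubmodule N) :
    N ≤ modRad' Rᵐᵒᵖ R := by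
  refine le_sInf fun m hm => ?_
  by_contra hnm
  exact hm.1 (h m (hm.2 _ (right_lt_sup.mpr hnm)))

lemma usAux_rad_small : IsSmallSubmodule (modRad' Rᵐᵒᵖ R) := by
  intro A hA
  by_contra hA'
  rcases (usAux_coatomic.eq_top_or_exists_le_coatom A).resolve_left hA' with ⟨m, hm, hAm⟩
  have hJm : modRad' Rᵐᵒᵖ R ≤ m := sInf_le hm
  exact hm.1 (top_le_iff.mp (hA ▸ sup_le hJm hAm))

/-- Left annihilator of `a` as a right ideal. -/
def usAux_lann (a : R) : Submodule Rᵐᵒᵖ R where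
  carrier := {x | a * x = 0}
  add_mem' := by intro x y hx hy; simp only [Set.mem_setOf_eq] at *; rw [mul_add, hx, hy, add_zero]
  zero_mem' := by simp
  smul_mem' := by
    intro c x hx
    simp only [Set.mem_setOf_eq, MulOpposite.smul_eq_mul_unop] at *
    rw [← mul_assoc, hx, zero_mul]

/-- Left multiplication by `a` as an `Rᵐᵒᵖ`-linear map. -/
def usAux_lmul (a : R) : R →ₗ[Rᵐᵒᵖ] R where
  toFun x := a * x
  map_add' := mul_add a
  map_smul' c x := by simp [MulOpposite.smul_eq_mul_unop, mul_assoc]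

end Aux

theorem us_ring_iff_jacobson_minimal_square_zero (R : Type*) [Ring R] :
    (∃! N : Submodule Rᵐᵒᵖ R, N ≠ ⊥ ∧ IsSmallSubmodule N) ↔
      (IsAtom (modRad' Rᵐᵒᵖ R) ∧
        ∀ a ∈ modRad' Rᵐᵒᵖ R, ∀ b ∈ modRad' Rᵐᵒᵖ R, a * b = 0) := by
  set J := modRad' Rᵐᵒᵖ R with hJdef
  constructor
  · rintro ⟨N, ⟨hN0, hNs⟩, huniq⟩
    have hNJ : N ≤ J := usAux_small_le_rad hNs
    have hJ0 : J ≠ ⊥ := fun h => hN0 (le_bot_iff.mp (h ▸ hNJ))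
    have hJN : J = N := huniq J ⟨hJ0, usAux_rad_small⟩
    have hatom : IsAtom J := by
      refine ⟨hJ0, fun b hb => ?_⟩
      by_contra hb0
      have hbs : IsSmallSubmodule b := fun A hA =>
        usAux_rad_small A (top_le_iff.mp (hA ▸ sup_le_sup_right hb.le A))
      exact hb.ne ((huniq b ⟨hb0, hbs⟩).trans hJN.symm)
    refine ⟨hatom, fun a ha b hb => ?_⟩
    by_contra hab
    -- `aJ = J`, giving `e ∈ J` with `a * e = a`
    set aJ := Submodule.map (usAux_lmul a) J with haJdef
    have haJle : aJ ≤ J := by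
      rintro _ ⟨x, hx, rfl⟩
      exact J.smul_mem (MulOpposite.op x) ha
    have haJne : aJ ≠ ⊥ := by
      intro h
      have : a * b ∈ aJ := ⟨b, hb, rfl⟩
      rw [h, Submodule.mem_bot] at this
      exact hab this
    have haJ : aJ = J := by
      rcases lt_or_eq_of_le haJle with h | h
      · exact absurd (hatom.2 _ h) haJne
      · exact h
    have haaJ : a ∈ aJ := haJ ▸ ha
    obtain ⟨e, heJ, hae⟩ := haaJ
    have hae : a * e = a := hae
    have ha0 : a ≠ 0 := fun h => hab (by rw [h, zero_mul])
    -- the annihilator meets J trivially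
    have hTJ : usAux_lann a ⊓ J = ⊥ := by
      rcases lt_or_eq_of_le (inf_le_right : usAux_lann a ⊓ J ≤ J) with h | h
      · exact hatom.2 _ h
      · exfalso
        have : b ∈ usAux_lann a ⊓ J := h.symm ▸ hb
        exact hab this.1
    -- `e` is a nonzero idempotent
    have hee : e * e = e := by
      have hmem : e * e - e ∈ usAux_lann a ⊓ J := by
        constructor
        · show a * (e * e - e) = 0
          rw [mul_sub, ← mul_assoc, hae, hae, sub_self]
        · exact sub_mem (J.smul_mem (MulOpposite.op e) heJ) heJ
      rw [hTJ, Submodule.mem_bot, sub_eq_zero] at hmem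
      exact hmem
    have he0 : e ≠ 0 := fun h => ha0 (by rw [← hae, h, mul_zero])
    -- idempotent in a small ideal is zero: contradiction
    have hsup : J ⊔ Submodule.span Rᵐᵒᵖ {1 - e} = ⊤ := by
      rw [eq_top_iff]
      intro r _
      have hr : r = e * r + (1 - e) * r := by noncomm_ring
      rw [hr]
      refine Submodule.add_mem _ (Submodule.mem_sup_left ?_) (Submodule.mem_sup_right ?_)
      · exact J.smul_mem (MulOpposite.op r) heJ
      · exact Submodule.smul_mem _ (MulOpposite.op r) (Submodule.subset_span rfl)
    have htop := usAux_rad_small _ hsup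
    have h1 : (1 : R) ∈ Submodule.span Rᵐᵒᵖ {1 - e} := htop ▸ Submodule.mem_top
    rw [Submodule.mem_span_singleton] at h1
    obtain ⟨c, hc⟩ := h1
    have hc' : (1 - e) * c.unop = 1 := by
      rw [← MulOpposite.smul_eq_mul_unop]; exact hc
    apply he0
    calc e = e * ((1 - e) * c.unop) := by rw [hc', mul_one]
      _ = (e * (1 - e)) * c.unop := by rw [mul_assoc]
      _ = 0 := by rw [mul_sub, mul_one, hee, sub_self, zero_mul]
  · rintro ⟨hatom, -⟩
    refine ⟨J, ⟨hatom.1, usAux_rad_small⟩, fun N ⟨hN0, hNs⟩ => ?_⟩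
    exact (hatom.le_iff.mp (usAux_small_le_rad hNs)).resolve_left hN0
end

section
/- For an R-module M the following are equivalent: (1) M is local and has a unique nonzero small submodule; (2) M has a unique minimal submodule and a unique proper essential submodule; (3) M has exactly one nontrivial (nonzero proper) submodule. Moreover, in this case Soc(M) = Rad(M). -/
namespace LocalUsAux

variable {R M : Type*} [Ring R] [AddCommGroup M] [Module R M]

/-- Zorn's lemma for sets of submodules closed under sups of nonempty chains. -/
lemma zorn_sub (s : Set (Submodule R M)) {x : Submodule R M} (hx : x ∈ s)
    (hclosed : ∀ c ⊆ s, IsChain (· ≤ ·) c → c.Nonempty → sSup c ∈ s) :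
    ∃ m, x ≤ m ∧ m ∈ s ∧ ∀ z ∈ s, m ≤ z → z = m := by
  obtain ⟨m, hxm, hm⟩ := zorn_le_nonempty₀ s (fun c hcs hchain y hy =>
    ⟨sSup c, hclosed c hcs hchain ⟨y, hy⟩, fun z hz => le_sSup hz⟩) x hx
  exact ⟨m, hxm, hm.1, fun z hz hmz => le_antisymm (hm.2 hz hmz) hmz⟩

/-- Every submodule has a complement `C` (maximal with trivial intersection),
and then `W ⊔ C` is essential. -/
lemma exists_compl_essential (W : Submodule R M) :
    ∃ C : Submodule R M, W ⊓ C = ⊥ ∧ ∀ X : Submodule R M, X ≠ ⊥ → (W ⊔ C) ⊓ X ≠ ⊥ := by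
  set s : Set (Submodule R M) := {C | W ⊓ C = ⊥} with hs
  have hbot : (⊥ : Submodule R M) ∈ s := by simp [hs]
  have hclosed : ∀ c ⊆ s, IsChain (· ≤ ·) c → c.Nonempty → sSup c ∈ s := by
    intro c hcs hchain hne
    rw [Set.mem_setOf_eq, eq_bot_iff]
    intro z hz
    obtain ⟨hzW, hzc⟩ := Submodule.mem_inf.mp hz
    obtain ⟨p, hp, hzp⟩ := (Submodule.mem_sSup_of_directed hne hchain.directedOn).mp hzc
    have h1 : W ⊓ p = ⊥ := hcs hp
    have : z ∈ W ⊓ p := Submodule.mem_inf.mpr ⟨hzW, hzp⟩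
    rw [h1] at this
    exact this
  obtain ⟨C, -, hCs, hCmax⟩ := zorn_sub s hbot hclosed
  refine ⟨C, hCs, ?_⟩
  intro X hX hcon
  have h1 : W ⊓ (C ⊔ X) = ⊥ := by
    rw [eq_bot_iff]
    intro w hw
    obtain ⟨hwW, hwCX⟩ := Submodule.mem_inf.mp hw
    obtain ⟨c, hc, x, hx2, hcx⟩ := Submodule.mem_sup.mp hwCX
    have hxmem : w - c ∈ (W ⊔ C) ⊓ X := by
      refine Submodule.mem_inf.mpr ⟨?_, ?_⟩
      · exact Submodule.sub_mem _ (Submodule.mem_sup_left hwW) (Submodule.mem_sup_right hc)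
      · have : w - c = x := by rw [← hcx]; abel
        rw [this]; exact hx2
    rw [hcon] at hxmem
    have hwc : w = c := by
      have := (Submodule.mem_bot R).mp hxmem
      have := sub_eq_zero.mp this
      exact this
    have : w ∈ W ⊓ C := Submodule.mem_inf.mpr ⟨hwW, hwc ▸ hc⟩
    rw [hCs] at this
    exact this
  have h2 : C ⊔ X = C := hCmax _ h1 le_sup_left
  have hXC : X ≤ C := by rw [← h2]; exact le_sup_right
  apply hX
  rw [eq_bot_iff, ← hcon]
  exact le_inf (hXC.trans le_sup_right) le_rfl

/-- A nonzero cyclic submodule has a maximal proper submodule. -/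
lemma exists_coatom_below {y : M} (hy : y ≠ 0) :
    ∃ W : Submodule R M, W < Submodule.span R {y} ∧
      ∀ Z ≤ Submodule.span R {y}, W < Z → Z = Submodule.span R {y} := by
  set s : Set (Submodule R M) := {Z | Z ≤ Submodule.span R {y} ∧ y ∉ Z} with hs
  have hbot : (⊥ : Submodule R M) ∈ s := ⟨bot_le, by simpa using hy⟩
  have hclosed : ∀ c ⊆ s, IsChain (· ≤ ·) c → c.Nonempty → sSup c ∈ s := by
    intro c hcs hchain hne
    constructor
    · exact sSup_le fun Z hZ => (hcs hZ).1
    · intro hmem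
      obtain ⟨p, hp, hyp⟩ := (Submodule.mem_sSup_of_directed hne hchain.directedOn).mp hmem
      exact (hcs hp).2 hyp
  obtain ⟨W, -, ⟨hWle, hWy⟩, hWmax⟩ := zorn_sub s hbot hclosed
  have hWlt : W < Submodule.span R {y} :=
    lt_of_le_of_ne hWle (fun h => hWy (h ▸ Submodule.mem_span_singleton_self y))
  refine ⟨W, hWlt, ?_⟩
  intro Z hZle hWZ
  by_contra hne
  have hyZ : y ∉ Z := fun hyZ =>
    hne (le_antisymm hZle ((Submodule.span_singleton_le_iff_mem _ _).mpr hyZ))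
  exact hWZ.ne (hWmax Z ⟨hZle, hyZ⟩ hWZ.le).symm

/-- Key lemma: unique atom + unique proper essential forces the atom below
every nonzero submodule. -/
lemma atom_le_of_unique (S E : Submodule R M)
    (_hSatom : IsAtom S) (hSuniq : ∀ A : Submodule R M, IsAtom A → A = S)
    (_hET : E ≠ ⊤) (hEess : ∀ A : Submodule R M, A ≠ ⊥ → E ⊓ A ≠ ⊥)
    (hEuniq : ∀ F : Submodule R M, F ≠ ⊤ → (∀ A : Submodule R M, A ≠ ⊥ → F ⊓ A ≠ ⊥) → F = E) :
    ∀ X : Submodule R M, X ≠ ⊥ → S ≤ X := by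
  intro X hX
  obtain ⟨y, hyEX, hy0⟩ := Submodule.exists_mem_ne_zero_of_ne_bot (hEess X hX)
  set Y : Submodule R M := Submodule.span R {y} with hY
  have hYle : Y ≤ E ⊓ X := (Submodule.span_singleton_le_iff_mem _ _).mpr hyEX
  obtain ⟨W, hWlt, hWmax⟩ := exists_coatom_below (R := R) hy0
  obtain ⟨C, hWC, hess⟩ := exists_compl_essential W
  have hEle : E ≤ W ⊔ C := by
    by_cases hG : W ⊔ C = ⊤
    · rw [hG]; exact le_top
    · exact le_of_eq (hEuniq _ hG (fun A hA => hess A hA)).symm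
  have hYG : Y ≤ W ⊔ C := le_trans (hYle.trans inf_le_left) hEle
  -- modularity: Y = (Y ⊓ C) ⊔ W
  have hmod : Y = (Y ⊓ C) ⊔ W := by
    have h1 : Y ⊓ (C ⊔ W) = Y ⊓ C ⊔ W := (inf_sup_assoc_of_le C hWlt.le).symm
    rw [← h1, sup_comm C W, inf_eq_left.mpr hYG]
  set A : Submodule R M := Y ⊓ C with hA
  have hA0 : A ≠ ⊥ := by
    intro h
    rw [h, bot_sup_eq] at hmod
    exact hWlt.ne' hmod
  have hAY : A ≤ Y := inf_le_left
  have hAC : A ≤ C := inf_le_right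
  have hAatom : IsAtom A := by
    refine ⟨hA0, ?_⟩
    intro Z hZA
    by_contra hZ0
    have hZW : ¬ Z ≤ W := by
      intro hZW
      apply hZ0
      rw [eq_bot_iff, ← hWC]
      exact le_inf hZW (hZA.le.trans hAC)
    have hWZlt : W < W ⊔ Z := by
      rcases lt_or_eq_of_le (le_sup_left : W ≤ W ⊔ Z) with h | h
      · exact h
      · exact absurd (le_sup_right.trans h.symm.le) hZW
    have hWZle : W ⊔ Z ≤ Y := sup_le hWlt.le (hZA.le.trans hAY)
    have hWZ : W ⊔ Z = Y := hWmax _ hWZle hWZlt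
    have : (Z ⊔ W) ⊓ A = Z ⊔ (W ⊓ A) := sup_inf_assoc_of_le W hZA.le
    rw [sup_comm Z W, hWZ, inf_eq_right.mpr hAY] at this
    have hWA : W ⊓ A = ⊥ := by
      rw [eq_bot_iff, ← hWC]
      exact inf_le_inf_left _ hAC
    rw [hWA, sup_bot_eq] at this
    exact hZA.ne this.symm
  calc S = A := (hSuniq A hAatom).symm
  _ ≤ Y := hAY
  _ ≤ X := hYle.trans inf_le_right

end LocalUsAux

theorem local_us_iff_unique_nontrivial (R M : Type*) [Ring R] [AddCommGroup M]
    [Module R M] :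
    (((∃ K : Submodule R M, IsCoatom K ∧ ∀ N : Submodule R M, N ≠ ⊤ → N ≤ K) ∧
        (∃! N : Submodule R M, N ≠ ⊥ ∧ IsSmallSubmodule N)) ↔
      (∃! N : Submodule R M, N ≠ ⊥ ∧ N ≠ ⊤)) ∧
    (((∃! N : Submodule R M, IsAtom N) ∧
        (∃! N : Submodule R M, N ≠ ⊤ ∧ ∀ A : Submodule R M, A ≠ ⊥ → N ⊓ A ≠ ⊥)) ↔
      (∃! N : Submodule R M, N ≠ ⊥ ∧ N ≠ ⊤)) ∧
    ((∃! N : Submodule R M, N ≠ ⊥ ∧ N ≠ ⊤) → modSoc R M = modRad' R M) := by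
  -- common facts for the "unique nontrivial submodule" condition
  have small_ne_top : ∀ N : Submodule R M, (⊥ : Submodule R M) ≠ ⊤ →
      IsSmallSubmodule N → N ≠ ⊤ := by
    intro N hbt hN hNtop
    exact hbt (hN ⊥ (by rw [hNtop, top_sup_eq]))
  refine ⟨⟨?_, ?_⟩, ⟨?_, ?_⟩, ?_⟩
  · -- (1) → (3)
    rintro ⟨⟨K, hKco, hKall⟩, S, ⟨hS0, hSsm⟩, hSuniq⟩
    have hbt : (⊥ : Submodule R M) ≠ ⊤ := by
      intro h
      exact hS0 (le_antisymm (le_top.trans h.symm.le) bot_le)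
    have hST : S ≠ ⊤ := small_ne_top S hbt hSsm
    have hsmall : ∀ N : Submodule R M, N ≠ ⊤ → IsSmallSubmodule N := by
      intro N hN A hNA
      by_contra hA
      exact hKco.1 (le_antisymm le_top (hNA ▸ sup_le (hKall N hN) (hKall A hA)))
    exact ⟨S, ⟨hS0, hST⟩, fun X ⟨hX0, hXT⟩ => hSuniq X ⟨hX0, hsmall X hXT⟩⟩
  · -- (3) → (1)
    rintro ⟨N, ⟨hN0, hNT⟩, hNu⟩
    have hbt : (⊥ : Submodule R M) ≠ ⊤ := fun h =>
      hN0 (le_antisymm (le_top.trans h.symm.le) bot_le)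
    have tri : ∀ X : Submodule R M, X = ⊥ ∨ X = N ∨ X = ⊤ := by
      intro X
      by_cases h1 : X = ⊥
      · exact Or.inl h1
      by_cases h2 : X = ⊤
      · exact Or.inr (Or.inr h2)
      exact Or.inr (Or.inl (hNu X ⟨h1, h2⟩))
    have hNsmall : IsSmallSubmodule N := by
      intro A hA
      rcases tri A with h | h | h
      · rw [h, sup_bot_eq] at hA; exact absurd hA hNT
      · rw [h, sup_idem] at hA; exact absurd hA hNT
      · exact h
    refine ⟨⟨N, ⟨hNT, ?_⟩, ?_⟩, N, ⟨hN0, hNsmall⟩, ?_⟩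
    · intro B hB
      rcases tri B with h | h | h
      · exact absurd (h ▸ hB) (by simp)
      · exact absurd h hB.ne'
      · exact h
    · intro X hX
      rcases tri X with h | h | h
      · exact h ▸ bot_le
      · exact h ▸ le_rfl
      · exact absurd h hX
    · rintro X ⟨hX0, hXsm⟩
      exact hNu X ⟨hX0, small_ne_top X hbt hXsm⟩
  · -- (2) → (3)
    rintro ⟨⟨S, hSatom, hSuA⟩, E, ⟨hET, hEess⟩, hEu⟩
    have key := LocalUsAux.atom_le_of_unique S E hSatom (fun A hA => hSuA A hA) hET hEess
      (fun F hFT hFe => hEu F ⟨hFT, hFe⟩)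
    have hE0 : E ≠ ⊥ := by
      intro h
      exact hEess S hSatom.1 (by rw [h, bot_inf_eq])
    refine ⟨E, ⟨hE0, hET⟩, ?_⟩
    rintro X ⟨hX0, hXT⟩
    refine hEu X ⟨hXT, fun A hA => ?_⟩
    intro h
    exact hSatom.1 (le_bot_iff.mp (h ▸ le_inf (key X hX0) (key A hA)))
  · -- (3) → (2)
    rintro ⟨N, ⟨hN0, hNT⟩, hNu⟩
    have tri : ∀ X : Submodule R M, X = ⊥ ∨ X = N ∨ X = ⊤ := by
      intro X
      by_cases h1 : X = ⊥
      · exact Or.inl h1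
      by_cases h2 : X = ⊤
      · exact Or.inr (Or.inr h2)
      exact Or.inr (Or.inl (hNu X ⟨h1, h2⟩))
    have hNatom : IsAtom N := by
      refine ⟨hN0, fun B hB => ?_⟩
      rcases tri B with h | h | h
      · exact h
      · exact absurd h hB.ne
      · exact absurd (h ▸ hB) (by simp)
    have hNess : ∀ A : Submodule R M, A ≠ ⊥ → N ⊓ A ≠ ⊥ := by
      intro A hA
      rcases tri A with h | h | h
      · exact absurd h hA
      · rw [h, inf_idem]; exact hN0
      · rw [h, inf_top_eq]; exact hN0
    refine ⟨⟨N, hNatom, ?_⟩, N, ⟨hNT, hNess⟩, ?_⟩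
    · intro A hA
      rcases tri A with h | h | h
      · exact absurd h hA.1
      · exact h
      · exfalso
        have := hA.2 N (h ▸ lt_top_iff_ne_top.mpr hNT)
        exact hN0 this
    · rintro F ⟨hFT, hFess⟩
      have hF0 : F ≠ ⊥ := by
        intro h
        exact hFess N hN0 (by rw [h, bot_inf_eq])
      exact hNu F ⟨hF0, hFT⟩
  · -- (3) → soc = rad'
    rintro ⟨N, ⟨hN0, hNT⟩, hNu⟩
    have tri : ∀ X : Submodule R M, X = ⊥ ∨ X = N ∨ X = ⊤ := by
      intro X
      by_cases h1 : X = ⊥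
      · exact Or.inl h1
      by_cases h2 : X = ⊤
      · exact Or.inr (Or.inr h2)
      exact Or.inr (Or.inl (hNu X ⟨h1, h2⟩))
    have hNatom : IsAtom N := by
      refine ⟨hN0, fun B hB => ?_⟩
      rcases tri B with h | h | h
      · exact h
      · exact absurd h hB.ne
      · exact absurd (h ▸ hB) (by simp)
    have hNcoatom : IsCoatom N := by
      refine ⟨hNT, fun B hB => ?_⟩
      rcases tri B with h | h | h
      · exact absurd (h ▸ hB) (by simp)
      · exact absurd h hB.ne'
      · exact h
    have hsoc : modSoc R M = N := by
      apply le_antisymm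
      · apply sSup_le
        intro A hA
        rcases tri A with h | h | h
        · exact h ▸ bot_le
        · exact h ▸ le_rfl
        · exfalso
          have := hA.2 N (h ▸ lt_top_iff_ne_top.mpr hNT)
          exact hN0 this
      · exact le_sSup hNatom
    have hrad : modRad' R M = N := by
      apply le_antisymm
      · exact sInf_le hNcoatom
      · apply le_sInf
        intro K hK
        rcases tri K with h | h | h
        · exfalso
          have := hK.2 N (h ▸ bot_lt_iff_ne_bot.mpr hN0)
          exact hNT this
        · exact h ▸ le_rfl
        · exact absurd h hK.1
    rw [hsoc, hrad]
end

section
/- Let R be a ring, M an R-module and S = End_R(M). Then every S-submodule of M (viewing M as a left S-module) is also an R-submodule of M. Consequently, for a multiplication module M over a commutative ring R, a subset N of M is an R-submodule if and only if it is an S-submodule, so the lattices of R-submodules and S-submodules of M coincide. -/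
theorem multiplication_module_submodule_lattices_coincide (R M : Type*) [CommRing R]
    [AddCommGroup M] [Module R M] :
    (∀ N : Submodule (Module.End R M) M, ∃ N' : Submodule R M, (N' : Set M) = (N : Set M)) ∧
    ((∀ N : Submodule R M, ∃ I : Ideal R, N = I • (⊤ : Submodule R M)) →
      ∀ s : Set M, (∃ N : Submodule R M, (N : Set M) = s) ↔
        (∃ N : Submodule (Module.End R M) M, (N : Set M) = s)) := by
  have toR : ∀ N : Submodule (Module.End R M) M,
      ∃ N' : Submodule R M, (N' : Set M) = (N : Set M) := by
    intro N
    refine ⟨{ carrier := N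
              add_mem' := fun h1 h2 => N.add_mem h1 h2
              zero_mem' := N.zero_mem
              smul_mem' := fun r m hm => ?_ }, rfl⟩
    have : r • m = (LinearMap.lsmul R M r) • m := rfl
    rw [this]
    exact N.smul_mem _ hm
  refine ⟨toR, fun hmul s => ⟨?_, ?_⟩⟩
  · rintro ⟨N, rfl⟩
    obtain ⟨I, hI⟩ := hmul N
    refine ⟨{ carrier := N
              add_mem' := fun h1 h2 => N.add_mem h1 h2
              zero_mem' := N.zero_mem
              smul_mem' := fun φ m hm => ?_ }, rfl⟩
    have hm' : m ∈ I • (⊤ : Submodule R M) := hI ▸ hm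
    have : φ m ∈ I • (⊤ : Submodule R M) := by
      refine Submodule.smul_induction_on hm' (fun r hr x _ => ?_)
        (fun x y hx hy => ?_)
      · rw [map_smul]
        exact Submodule.smul_mem_smul hr Submodule.mem_top
      · rw [map_add]; exact Submodule.add_mem _ hx hy
    exact hI ▸ this
  · rintro ⟨N, rfl⟩
    obtain ⟨N', hN'⟩ := toR N
    exact ⟨N', hN'⟩
end
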